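/- arXiv:1103.3381 — 12 statements merged into one kernel-verified Lean document; each statement's English description precedes it below -/
import Mathlib

section
/- Let q be an odd prime power and χ the quadratic character of F_q. For d ∈ F_q with d ≠ 0, 1, the sum over all x ∈ F_q with dx² ≠ 1 of χ((x²−1)/(dx²−1)) equals the sum over all x ∈ F_q of χ(x(x−1)(x−d)) minus χ(d). -/
open Finset

section helpers

variable {F : Type*} [Field F] [Fintype F] [DecidableEq F]

/-- Sum of a function of squares, weighted by number of square roots. -/
lemma sum_of_squares (hF : ringChar F ≠ 2) (f : F → ℤ) :
    ∑ x : F, f (x ^ 2) = ∑ u : F, (quadraticChar F u + 1) * f u := by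
  rw [← Finset.sum_fiberwise_of_maps_to' (g := fun x : F => x ^ 2)
      (fun i _ => Finset.mem_univ (i^2)) f]
  refine Finset.sum_congr rfl fun u _ => ?_
  rw [Finset.sum_const, nsmul_eq_mul]
  congr 1
  have := quadraticChar_card_sqrts hF u
  rw [← this]
  congr 1
  congr 1
  ext x
  simp [Set.mem_toFinset]

lemma sum_quadChar_shift (hF : ringChar F ≠ 2) :
    ∑ v : F, quadraticChar F (v * (v - 1)) = -1 := by
  have h1 : ∑ v : F, quadraticChar F (v * (v - 1))
      = ∑ v ∈ Finset.univ.filter (fun v : F => v ≠ 0),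
          quadraticChar F (v * (v - 1)) := by
    rw [Finset.sum_filter_of_ne]
    intro v _ hne
    intro hv
    apply hne
    rw [hv, zero_mul, MulChar.map_zero]
  have h2 : ∀ v : F, v ≠ 0 →
      quadraticChar F (v * (v - 1)) = quadraticChar F (1 - v⁻¹) := by
    intro v hv
    have : v * (v - 1) = v ^ 2 * (1 - v⁻¹) := by field_simp
    rw [this, map_mul, quadraticChar_sq_one' hv, one_mul]
  rw [h1, Finset.sum_congr rfl (fun v hv => h2 v (by simpa using hv))]
  have h3 : ∑ v ∈ Finset.univ.filter (fun v : F => v ≠ 0),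
      quadraticChar F (1 - v⁻¹)
      = ∑ t ∈ Finset.univ.filter (fun t : F => t ≠ 1), quadraticChar F t := by
    apply Finset.sum_nbij' (i := fun v => 1 - v⁻¹) (j := fun t => (1 - t)⁻¹)
    · intro v hv
      simp only [Finset.mem_filter, Finset.mem_univ, true_and] at hv ⊢
      intro h
      apply hv
      have : v⁻¹ = 0 := by linear_combination -h
      simpa using this
    · intro t ht
      simp only [Finset.mem_filter, Finset.mem_univ, true_and] at ht ⊢
      intro h
      apply ht
      have h1t : (1 : F) - t ≠ 0 := fun hh => ht (by linear_combination -hh)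
      exact absurd h (inv_ne_zero h1t)
    · intro v hv
      simp only [Finset.mem_filter, Finset.mem_univ, true_and] at hv
      field_simp
      ring
    · intro t ht
      simp only [Finset.mem_filter, Finset.mem_univ, true_and] at ht
      have h1t : (1 : F) - t ≠ 0 := fun hh => ht (by linear_combination -hh)
      field_simp
      ring
    · intro v hv; rfl
  rw [h3]
  have h4 : Finset.univ.filter (fun t : F => t ≠ 1) = Finset.univ.erase 1 :=
    Finset.filter_ne' _ _
  rw [h4, Finset.sum_erase_eq_sub (Finset.mem_univ 1), quadraticChar_sum_zero hF]
  simp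

lemma sum_aux_quadratic (hF : ringChar F ≠ 2) {d : F} (hd0 : d ≠ 0) (hd1 : d ≠ 1) :
    ∑ u : F, quadraticChar F ((u - 1) * (d * u - 1)) = -quadraticChar F d := by
  have hc : (d⁻¹ - 1 : F) ≠ 0 := by
    intro h
    apply hd1
    have : d⁻¹ = 1 := by linear_combination h
    have := congrArg (· * d) this
    simpa [inv_mul_cancel₀ hd0] using this.symm
  have hbij : Function.Bijective (fun v : F => 1 + (d⁻¹ - 1) * v) := by
    constructor
    · intro a b hab
      simp only at hab
      exact mul_left_cancel₀ hc (by linear_combination hab)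
    · intro y
      refine ⟨(y - 1) / (d⁻¹ - 1), ?_⟩
      have h1d : (1 : F) - d ≠ 0 := fun h => hd1 (by linear_combination -h)
      field_simp
      ring
  rw [← Fintype.sum_bijective _ hbij _ _ (fun v => rfl)]
  have key : ∀ v : F, ((1 + (d⁻¹ - 1) * v) - 1) * (d * (1 + (d⁻¹ - 1) * v) - 1)
      = ((d - 1) / d) ^ 2 * d * (v * (v - 1)) := by
    intro v; field_simp; ring
  have hdd : ((d - 1) / d : F) ≠ 0 := by
    apply div_ne_zero _ hd0
    intro h; exact hd1 (by linear_combination h)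
  calc ∑ v : F, quadraticChar F ((1 + (d⁻¹ - 1) * v - 1) * (d * (1 + (d⁻¹ - 1) * v) - 1))
      = ∑ v : F, quadraticChar F d * quadraticChar F (v * (v - 1)) := by
        refine Finset.sum_congr rfl fun v _ => ?_
        rw [key v, map_mul, map_mul, quadraticChar_sq_one' hdd, one_mul]
    _ = -quadraticChar F d := by
        rw [← Finset.mul_sum, sum_quadChar_shift hF, mul_neg_one]

lemma sum_aux_cubic {d : F} (hd0 : d ≠ 0) :
    ∑ u : F, quadraticChar F (u * ((u - 1) * (d * u - 1)))
      = ∑ v : F, quadraticChar F (v * (v - 1) * (v - d)) := by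
  have hbij : Function.Bijective (fun u : F => d * u) :=
    (mulLeft_bijective₀ d hd0)
  refine Fintype.sum_bijective _ hbij _ _ fun u => ?_
  conv_rhs => rw [show d * u * (d * u - 1) * (d * u - d)
      = d ^ 2 * (u * ((u - 1) * (d * u - 1))) by ring,
    map_mul, quadraticChar_sq_one' hd0, one_mul]

end helpers

open scoped Classical in
theorem edwards_legendre_charsum (F : Type*) [Field F] [Fintype F] [DecidableEq F]
    (hF : ringChar F ≠ 2) (d : F) (hd0 : d ≠ 0) (hd1 : d ≠ 1) :
    ∑ x ∈ Finset.univ.filter (fun x : F => d * x ^ 2 ≠ 1),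
        quadraticChar F ((x ^ 2 - 1) / (d * x ^ 2 - 1))
      = (∑ x : F, quadraticChar F (x * (x - 1) * (x - d))) - quadraticChar F d := by
  have step1 : ∑ x ∈ Finset.univ.filter (fun x : F => d * x ^ 2 ≠ 1),
        quadraticChar F ((x ^ 2 - 1) / (d * x ^ 2 - 1))
      = ∑ x : F, quadraticChar F ((x ^ 2 - 1) * (d * x ^ 2 - 1)) := by
    have e1 : ∑ x ∈ Finset.univ.filter (fun x : F => d * x ^ 2 ≠ 1),
          quadraticChar F ((x ^ 2 - 1) / (d * x ^ 2 - 1))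
        = ∑ x ∈ Finset.univ.filter (fun x : F => d * x ^ 2 ≠ 1),
          quadraticChar F ((x ^ 2 - 1) * (d * x ^ 2 - 1)) := by
      refine Finset.sum_congr rfl fun x hx => ?_
      simp only [Finset.mem_filter, Finset.mem_univ, true_and] at hx
      have hb : d * x ^ 2 - 1 ≠ 0 := fun h => hx (by linear_combination h)
      have : (x ^ 2 - 1) / (d * x ^ 2 - 1)
          = (x ^ 2 - 1) * (d * x ^ 2 - 1) * ((d * x ^ 2 - 1)⁻¹) ^ 2 := by
        field_simp
      rw [this, map_mul, quadraticChar_sq_one' (inv_ne_zero hb), mul_one]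
    rw [e1, Finset.sum_filter_of_ne]
    intro x _ hne h
    apply hne
    rw [show (x ^ 2 - 1) * (d * x ^ 2 - 1) = (x ^ 2 - 1) * 0 by rw [h]; ring,
      mul_zero, MulChar.map_zero]
  rw [step1]
  have step2 : ∑ x : F, quadraticChar F ((x ^ 2 - 1) * (d * x ^ 2 - 1))
      = ∑ u : F, (quadraticChar F u + 1) * quadraticChar F ((u - 1) * (d * u - 1)) :=
    sum_of_squares hF (fun u => quadraticChar F ((u - 1) * (d * u - 1)))
  rw [step2]
  have step3 : ∀ u : F, (quadraticChar F u + 1) * quadraticChar F ((u - 1) * (d * u - 1))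
      = quadraticChar F (u * ((u - 1) * (d * u - 1)))
        + quadraticChar F ((u - 1) * (d * u - 1)) := by
    intro u
    rw [add_mul, one_mul, ← map_mul]
  rw [Finset.sum_congr rfl (fun u _ => step3 u), Finset.sum_add_distrib,
    sum_aux_cubic hd0, sum_aux_quadratic hF hd0 hd1]
  ring
end

section
/- Let q be an odd prime power, χ the quadratic character of F_q, and F : F_q → ℂ any function. Let a₁,b₁,c₁,a₂,b₂,c₂ ∈ F_q with a₂ ≠ 0, set D = b₂²−4a₂c₂, Δ = 4a₁c₂−2b₁b₂+4a₂c₁, d = b₁²−4a₁c₁, and assume Δ²−4dD ≠ 0. Let Z be the set of roots of a₂x²+b₂x+c₂ in F_q. Then ∑_{x ∈ F_q \ Z} F((a₁x²+b₁x+c₁)/(a₂x²+b₂x+c₂)) = ∑_{x∈F_q} χ(Dx²+Δx+d)·F(x) + ∑_{x∈F_q} F(x) − F(a₁/a₂). -/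
open Finset

lemma count_quad {K : Type*} [Field K] [Fintype K] [DecidableEq K]
    (hK : ringChar K ≠ 2) (A B C : K) (hA : A ≠ 0) :
    ((univ.filter fun x : K => A * x ^ 2 + B * x + C = 0).card : ℤ)
      = quadraticChar K (B ^ 2 - 4 * A * C) + 1 := by
  classical
  have h2 : (2 : K) ≠ 0 := Ring.two_ne_zero hK
  rw [← quadraticChar_card_sqrts hK]
  congr 1
  have hset : {x : K | x ^ 2 = B ^ 2 - 4 * A * C}.toFinset
      = univ.filter fun y : K => y ^ 2 = B ^ 2 - 4 * A * C := by
    ext y; simp [Set.mem_toFinset]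
  rw [hset]
  refine Finset.card_nbij' (fun x => 2 * A * x + B) (fun y => (y - B) / (2 * A)) ?_ ?_ ?_ ?_
  · intro x hx
    simp only [mem_coe, mem_filter, mem_univ, true_and] at hx ⊢
    linear_combination 4 * A * hx
  · intro y hy
    simp only [mem_coe, mem_filter, mem_univ, true_and] at hy ⊢
    field_simp
    linear_combination hy
  · intro x _
    field_simp
    ring
  · intro y _
    field_simp
    ring

open scoped Classical in
theorem williams_charsum (K : Type*) [Field K] [Fintype K] [DecidableEq K]
    (hK : ringChar K ≠ 2) (f : K → ℂ) (a₁ b₁ c₁ a₂ b₂ c₂ : K) (ha₂ : a₂ ≠ 0)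
    (hnd : (4 * a₁ * c₂ - 2 * b₁ * b₂ + 4 * a₂ * c₁) ^ 2
        - 4 * (b₁ ^ 2 - 4 * a₁ * c₁) * (b₂ ^ 2 - 4 * a₂ * c₂) ≠ 0) :
    ∑ x ∈ Finset.univ.filter (fun x : K => a₂ * x ^ 2 + b₂ * x + c₂ ≠ 0),
        f ((a₁ * x ^ 2 + b₁ * x + c₁) / (a₂ * x ^ 2 + b₂ * x + c₂))
      = (∑ x : K, ((quadraticChar K ((b₂ ^ 2 - 4 * a₂ * c₂) * x ^ 2
              + (4 * a₁ * c₂ - 2 * b₁ * b₂ + 4 * a₂ * c₁) * x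
              + (b₁ ^ 2 - 4 * a₁ * c₁)) : ℤ) : ℂ) * f x)
        + (∑ x : K, f x) - f (a₁ / a₂) := by
  classical
  set num : K → K := fun x => a₁ * x ^ 2 + b₁ * x + c₁ with hnum
  set den : K → K := fun x => a₂ * x ^ 2 + b₂ * x + c₂ with hden
  set S : Finset K := univ.filter (fun x : K => den x ≠ 0) with hS
  set r : K → K := fun x => num x / den x with hr
  set g : K → K := fun u => (b₂ ^ 2 - 4 * a₂ * c₂) * u ^ 2
      + (4 * a₁ * c₂ - 2 * b₁ * b₂ + 4 * a₂ * c₁) * u + (b₁ ^ 2 - 4 * a₁ * c₁) with hg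
  set u₀ : K := a₁ / a₂ with hu₀
  -- no common roots
  have nocom : ∀ x : K, num x = 0 → den x = 0 → False := by
    intro x h1 h2
    apply hnd
    have hd : b₁ ^ 2 - 4 * a₁ * c₁ = (2 * a₁ * x + b₁) ^ 2 := by
      simp only [hnum] at h1; linear_combination (-4 * a₁) * h1
    have hD : b₂ ^ 2 - 4 * a₂ * c₂ = (2 * a₂ * x + b₂) ^ 2 := by
      simp only [hden] at h2; linear_combination (-4 * a₂) * h2
    have hΔ : 4 * a₁ * c₂ - 2 * b₁ * b₂ + 4 * a₂ * c₁
        = -2 * (2 * a₁ * x + b₁) * (2 * a₂ * x + b₂) := by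
      simp only [hnum] at h1; simp only [hden] at h2
      linear_combination 4 * a₁ * h2 + 4 * a₂ * h1
    rw [hd, hD, hΔ]; ring
  -- the fiber counts
  have key : ∀ u : K, ((S.filter fun x => r x = u).card : ℂ)
      = if u = u₀ then ((quadraticChar K (g u) : ℤ) : ℂ)
        else ((quadraticChar K (g u) : ℤ) : ℂ) + 1 := by
    intro u
    have fiber_eq : S.filter (fun x => r x = u)
        = univ.filter (fun x => den x ≠ 0 ∧ num x = u * den x) := by
      ext x
      simp only [hS, hr, mem_filter, mem_univ, true_and, and_congr_right_iff]
      intro hdx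
      rw [div_eq_iff hdx]
    by_cases hu : u = u₀
    · -- linear case
      subst hu
      simp only [if_pos rfl]
      have hA0 : a₁ - u₀ * a₂ = 0 := by
        rw [hu₀]; field_simp; ring
      have hgu : g u₀ = (b₁ - u₀ * b₂) ^ 2 := by
        simp only [hg, hu₀]
        field_simp
        ring
      by_cases hB : b₁ - u₀ * b₂ = 0
      · by_cases hC : c₁ - u₀ * c₂ = 0
        · exfalso
          apply hnd
          rw [sub_eq_zero] at hB hC
          rw [hB, hC, hu₀]
          field_simp
          ring
        · -- empty fiber, char value 0
          have hempty : S.filter (fun x => r x = u₀) = ∅ := by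
            rw [fiber_eq]
            ext x
            simp only [mem_filter, mem_univ, true_and, notMem_empty, iff_false, not_and]
            intro hdx hx
            apply hC
            simp only [hnum, hden] at hx
            linear_combination hx - x ^ 2 * hA0 - x * hB
          rw [hempty]
          have : g u₀ = 0 := by rw [hgu, hB]; ring
          rw [this]
          simp
      · -- singleton fiber, char value 1
        have hsing : S.filter (fun x => r x = u₀) = {-(c₁ - u₀ * c₂) / (b₁ - u₀ * b₂)} := by
          rw [fiber_eq]
          ext x
          simp only [mem_filter, mem_univ, true_and, mem_singleton]
          constructor
          · rintro ⟨hdx, hx⟩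
            have : (b₁ - u₀ * b₂) * x + (c₁ - u₀ * c₂) = 0 := by
              simp only [hnum, hden] at hx
              linear_combination hx - x ^ 2 * hA0
            field_simp
            linear_combination this
          · intro hx
            have hlx : (b₁ - u₀ * b₂) * x + (c₁ - u₀ * c₂) = 0 := by
              rw [hx]; field_simp; ring
            have hnd0 : num x = u₀ * den x := by
              simp only [hnum, hden]
              linear_combination hlx + x ^ 2 * hA0
            have hdx : den x ≠ 0 := by
              intro h0
              exact nocom x (by rw [hnd0, h0, mul_zero]) h0
            exact ⟨hdx, hnd0⟩
        rw [hsing, hgu, quadraticChar_sq_one' hB]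
        simp
    · -- quadratic case
      simp only [if_neg hu]
      have hA : a₁ - u * a₂ ≠ 0 := by
        intro h
        apply hu
        rw [hu₀, eq_div_iff ha₂]
        linear_combination -h
      have hrw : S.filter (fun x => r x = u)
          = univ.filter (fun x => (a₁ - u * a₂) * x ^ 2 + (b₁ - u * b₂) * x
            + (c₁ - u * c₂) = 0) := by
        rw [fiber_eq]
        ext x
        simp only [mem_filter, mem_univ, true_and]
        constructor
        · rintro ⟨hdx, hx⟩
          simp only [hnum, hden] at hx
          linear_combination hx
        · intro hx
          have hnd0 : num x = u * den x := by
            simp only [hnum, hden]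
            linear_combination hx
          have hdx : den x ≠ 0 := by
            intro h0
            exact nocom x (by rw [hnd0, h0, mul_zero]) h0
          exact ⟨hdx, hnd0⟩
      rw [hrw]
      have := count_quad hK (a₁ - u * a₂) (b₁ - u * b₂) (c₁ - u * c₂) hA
      have hgu : (b₁ - u * b₂) ^ 2 - 4 * (a₁ - u * a₂) * (c₁ - u * c₂) = g u := by
        simp only [hg]; ring
      rw [hgu] at this
      exact_mod_cast this
  -- assemble
  have lhs_eq : ∑ x ∈ S, f (r x)
      = ∑ u : K, ((S.filter fun x => r x = u).card : ℂ) * f u := by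
    rw [← Finset.sum_fiberwise_of_maps_to (fun x _ => mem_univ (r x)) (fun x => f (r x))]
    refine Finset.sum_congr rfl fun u _ => ?_
    have hx : ∀ x ∈ S.filter fun x => r x = u, f (r x) = f u := fun x hx => by
      rw [(Finset.mem_filter.mp hx).2]
    rw [Finset.sum_congr rfl hx, Finset.sum_const, nsmul_eq_mul]
  calc ∑ x ∈ S, f (r x)
      = ∑ u : K, ((S.filter fun x => r x = u).card : ℂ) * f u := lhs_eq
    _ = ∑ u : K, ((((quadraticChar K (g u) : ℤ) : ℂ) + 1) * f u
          - (if u = u₀ then f u else 0)) := by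
        refine Finset.sum_congr rfl fun u _ => ?_
        rw [key u]
        by_cases hu : u = u₀
        · simp only [if_pos hu]; ring
        · simp only [if_neg hu]; ring
    _ = (∑ u : K, ((quadraticChar K (g u) : ℤ) : ℂ) * f u) + (∑ u : K, f u) - f u₀ := by
        rw [Finset.sum_sub_distrib]
        rw [Finset.sum_ite_eq' univ u₀ f]
        simp only [mem_univ, if_true]
        congr 1
        rw [← Finset.sum_add_distrib]
        refine Finset.sum_congr rfl fun u _ => ?_
        ring
end

section
/- Let q be an odd prime power and d ∈ F_q with d ≠ 0, 1. Then the number of affine points on the Edwards curve x²+y²=1+dx²y² over F_q, plus 2 + 2χ(d), equals the number of projective points on the Legendre curve y²=x(x−1)(x−d) over F_q. (Hence the smooth models of E_d and L_d have equal point counts and the curves are isogenous over F_q.) -/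
open Finset in
private lemma edw_aux_sq_mul {F : Type*} [Field F] [Fintype F] [DecidableEq F] (a s : F)
    (hs : s ≠ 0) : quadraticChar F (a * s ^ 2) = quadraticChar F a := by
  rw [map_mul, quadraticChar_sq_one' hs, mul_one]

open Finset in
private lemma edw_aux_card_sqrts {F : Type*} [Field F] [Fintype F] [DecidableEq F]
    (hF : ringChar F ≠ 2) (a : F) :
    ((Finset.univ.filter (fun x : F => x ^ 2 = a)).card : ℤ) = quadraticChar F a + 1 := by
  have := quadraticChar_card_sqrts hF a
  rw [Set.toFinset_setOf] at this
  exact_mod_cast this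

open Finset in
/-- The classical 2-isogeny character-sum identity. -/
private lemma edw_aux_isog {F : Type*} [Field F] [Fintype F] [DecidableEq F]
    (hF : ringChar F ≠ 2) (a b : F) (hb : b ≠ 0) :
    ∑ x : F, quadraticChar F (x * (x ^ 2 + a * x + b))
      = ∑ t : F, quadraticChar F (t * (t ^ 2 - 2 * a * t + (a ^ 2 - 4 * b))) := by
  have h2 : (2 : F) ≠ 0 := Ring.two_ne_zero hF
  have h4 : (4 : F) ≠ 0 := by
    have : (4 : F) = 2 * 2 := by norm_num
    rw [this]; exact mul_ne_zero h2 h2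
  have step1 : ∑ x : F, quadraticChar F (x * (x ^ 2 + a * x + b))
      = ∑ x ∈ univ.erase 0, quadraticChar F ((x + b * x⁻¹) + a) := by
    rw [show (∑ x : F, quadraticChar F (x * (x ^ 2 + a * x + b)))
        = ∑ x ∈ univ.erase 0, quadraticChar F (x * (x ^ 2 + a * x + b)) from
      (Finset.sum_erase _ (by simp)).symm]
    refine Finset.sum_congr rfl (fun x hx => ?_)
    have hx0 : x ≠ 0 := (Finset.mem_erase.mp hx).1
    have : x * (x ^ 2 + a * x + b) = ((x + b * x⁻¹) + a) * x ^ 2 := by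
      field_simp; ring
    rw [this, edw_aux_sq_mul _ _ hx0]
  have step2 : ∑ x ∈ univ.erase 0, quadraticChar F ((x + b * x⁻¹) + a)
      = ∑ v : F, ∑ x ∈ (univ.erase 0).filter (fun x => x + b * x⁻¹ = v),
          quadraticChar F (v + a) :=
    (Finset.sum_fiberwise' (univ.erase 0) (fun x => x + b * x⁻¹)
      (fun v => quadraticChar F (v + a))).symm
  have hfib : ∀ v : F, (((univ.erase 0).filter (fun x => x + b * x⁻¹ = v)).card : ℤ)
      = quadraticChar F (v ^ 2 - 4 * b) + 1 := by
    intro v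
    have hset : ((univ.erase 0).filter (fun x => x + b * x⁻¹ = v))
        = univ.filter (fun x : F => (2 * x - v) ^ 2 = v ^ 2 - 4 * b) := by
      ext x
      simp only [Finset.mem_filter, Finset.mem_erase, Finset.mem_univ, true_and, and_true]
      constructor
      · rintro ⟨hx0, hxv⟩
        have hv : x * x + b = v * x := by field_simp at hxv; linear_combination hxv
        linear_combination 4 * hv
      · intro h
        have hq : x * x - v * x + b = 0 := by
          have h4' : 4 * (x * x - v * x + b) = 0 := by linear_combination h
          have := mul_eq_zero.mp h4'
          tauto
        have hx0 : x ≠ 0 := by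
          rintro rfl
          simp at hq
          exact hb hq
        refine ⟨hx0, ?_⟩
        field_simp
        linear_combination hq
    rw [hset]
    have hcard : (univ.filter (fun x : F => (2 * x - v) ^ 2 = v ^ 2 - 4 * b)).card
        = (univ.filter (fun w : F => w ^ 2 = v ^ 2 - 4 * b)).card := by
      refine Finset.card_nbij' (fun x => 2 * x - v) (fun w => (w + v) / 2) ?_ ?_ ?_ ?_
      · intro x hx; simp only [Finset.mem_coe, Finset.mem_filter, Finset.mem_univ, true_and] at hx ⊢; exact hx
      · intro w hw; simp only [Finset.mem_coe, Finset.mem_filter, Finset.mem_univ, true_and] at hw ⊢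
        have : 2 * ((w + v) / 2) - v = w := by field_simp; ring
        rw [this]; exact hw
      · intro x _; field_simp; ring
      · intro w _; field_simp; ring
    rw [hcard, edw_aux_card_sqrts hF]
  rw [step1, step2]
  have step3 : ∀ v : F, ∑ x ∈ (univ.erase 0).filter (fun x => x + b * x⁻¹ = v),
      quadraticChar F (v + a)
      = (quadraticChar F (v ^ 2 - 4 * b) + 1) * quadraticChar F (v + a) := by
    intro v
    rw [Finset.sum_const, ← hfib v, nsmul_eq_mul]
  rw [Finset.sum_congr rfl (fun v _ => step3 v)]
  have expand : ∀ v : F, (quadraticChar F (v ^ 2 - 4 * b) + 1) * quadraticChar F (v + a)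
      = quadraticChar F ((v ^ 2 - 4 * b) * (v + a)) + quadraticChar F (v + a) := by
    intro v; rw [map_mul]; ring
  rw [Finset.sum_congr rfl (fun v _ => expand v), Finset.sum_add_distrib]
  have hzero : ∑ v : F, quadraticChar F (v + a) = 0 := by
    exact (Fintype.sum_equiv (Equiv.addRight a) (fun v => quadraticChar F (v + a))
      (fun w => quadraticChar F w) (fun v => rfl)).trans (quadraticChar_sum_zero hF)
  rw [hzero, add_zero]
  refine Fintype.sum_equiv (Equiv.addRight a) _ _ (fun v => ?_)
  simp only [Equiv.coe_addRight]
  congr 1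
  ring

open Finset in
/-- Möbius substitution `x = (u-1)/(u+1)` turning the Edwards quartic into a cubic. -/
private lemma edw_aux_stepA {F : Type*} [Field F] [Fintype F] [DecidableEq F]
    (hF : ringChar F ≠ 2) (d : F) :
    ∑ x : F, quadraticChar F ((1 - x ^ 2) * (1 - d * x ^ 2))
      = ∑ u : F, quadraticChar F (u * ((1 - d) * u ^ 2 + 2 * (1 + d) * u + (1 - d)))
        - quadraticChar F d := by
  have h2 : (2 : F) ≠ 0 := Ring.two_ne_zero hF
  have hg1 : quadraticChar F ((-1 : F) * ((1 - d) * (-1) ^ 2 + 2 * (1 + d) * (-1) + (1 - d)))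
      = quadraticChar F d := by
    have : ((-1 : F) * ((1 - d) * (-1) ^ 2 + 2 * (1 + d) * (-1) + (1 - d))) = d * 2 ^ 2 := by
      ring
    rw [this, edw_aux_sq_mul _ _ h2]
  have hsplit : ∑ u : F, quadraticChar F (u * ((1 - d) * u ^ 2 + 2 * (1 + d) * u + (1 - d)))
      = quadraticChar F d
        + ∑ u ∈ univ.erase (-1),
            quadraticChar F (u * ((1 - d) * u ^ 2 + 2 * (1 + d) * u + (1 - d))) := by
    rw [← hg1]
    exact (Finset.add_sum_erase _
      (fun u => quadraticChar F (u * ((1 - d) * u ^ 2 + 2 * (1 + d) * u + (1 - d))))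
      (mem_univ (-1 : F))).symm
  rw [hsplit, add_sub_cancel_left]
  rw [show (∑ x : F, quadraticChar F ((1 - x ^ 2) * (1 - d * x ^ 2)))
      = ∑ x ∈ univ.erase 1, quadraticChar F ((1 - x ^ 2) * (1 - d * x ^ 2)) from
    (Finset.sum_erase _ (by norm_num)).symm]
  refine Finset.sum_nbij' (fun x => (1 + x) * (1 - x)⁻¹) (fun u => (u - 1) * (u + 1)⁻¹)
    ?_ ?_ ?_ ?_ ?_
  · intro x hx
    have hx1 : (1 : F) - x ≠ 0 := sub_ne_zero.mpr (Ne.symm (Finset.mem_erase.mp hx).1)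
    simp only [Finset.mem_erase, Finset.mem_univ, and_true]
    intro hcon
    rw [← div_eq_mul_inv, div_eq_iff hx1] at hcon
    exact h2 (by linear_combination hcon)
  · intro u hu
    have hu1 : u + 1 ≠ 0 := by
      intro h0
      exact (Finset.mem_erase.mp hu).1 (by linear_combination h0)
    simp only [Finset.mem_erase, Finset.mem_univ, and_true]
    intro hcon
    rw [← div_eq_mul_inv, div_eq_iff hu1] at hcon
    exact h2 (by linear_combination -hcon)
  · intro x hx
    have hx1 : (1 : F) - x ≠ 0 := sub_ne_zero.mpr (Ne.symm (Finset.mem_erase.mp hx).1)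
    have e1 : (1 + x) * (1 - x)⁻¹ + 1 = 2 * (1 - x)⁻¹ := by
      field_simp
      ring
    have e2 : (1 + x) * (1 - x)⁻¹ - 1 = 2 * x * (1 - x)⁻¹ := by
      field_simp
      ring
    show ((1 + x) * (1 - x)⁻¹ - 1) * ((1 + x) * (1 - x)⁻¹ + 1)⁻¹ = x
    rw [e1, e2, mul_inv, inv_inv]
    field_simp
  · intro u hu
    have hu1 : u + 1 ≠ 0 := by
      intro h0
      exact (Finset.mem_erase.mp hu).1 (by linear_combination h0)
    have e1 : (1 : F) - (u - 1) * (u + 1)⁻¹ = 2 * (u + 1)⁻¹ := by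
      field_simp
      ring
    have e2 : (1 : F) + (u - 1) * (u + 1)⁻¹ = 2 * u * (u + 1)⁻¹ := by
      field_simp
      ring
    show (1 + (u - 1) * (u + 1)⁻¹) * (1 - (u - 1) * (u + 1)⁻¹)⁻¹ = u
    rw [e1, e2, mul_inv, inv_inv]
    field_simp
  · intro x hx
    have hx1 : (1 : F) - x ≠ 0 := sub_ne_zero.mpr (Ne.symm (Finset.mem_erase.mp hx).1)
    have key : (1 + x) * (1 - x)⁻¹
          * ((1 - d) * ((1 + x) * (1 - x)⁻¹) ^ 2 + 2 * (1 + d) * ((1 + x) * (1 - x)⁻¹)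
            + (1 - d))
        = (1 - x ^ 2) * (1 - d * x ^ 2) * (2 * ((1 - x)⁻¹) ^ 2) ^ 2 := by
      field_simp
      ring
    rw [key, edw_aux_sq_mul _ _ (mul_ne_zero h2 (pow_ne_zero _ (inv_ne_zero hx1)))]

open Finset in
/-- Rescaling `u = x/(1-d)` to a monic cubic. -/
private lemma edw_aux_stepB {F : Type*} [Field F] [Fintype F] [DecidableEq F]
    (d : F) (hd1 : d ≠ 1) :
    ∑ u : F, quadraticChar F (u * ((1 - d) * u ^ 2 + 2 * (1 + d) * u + (1 - d)))
      = ∑ x : F, quadraticChar F (x * (x ^ 2 + 2 * (1 + d) * x + (1 - d) ^ 2)) := by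
  have hc : (1 : F) - d ≠ 0 := sub_ne_zero.mpr (Ne.symm hd1)
  refine (Fintype.sum_equiv (Equiv.mulRight₀ ((1 - d)⁻¹) (inv_ne_zero hc))
    (fun x => quadraticChar F (x * (x ^ 2 + 2 * (1 + d) * x + (1 - d) ^ 2)))
    (fun u => quadraticChar F (u * ((1 - d) * u ^ 2 + 2 * (1 + d) * u + (1 - d))))
    (fun x => ?_)).symm
  show quadraticChar F (x * (x ^ 2 + 2 * (1 + d) * x + (1 - d) ^ 2))
      = quadraticChar F ((x * (1 - d)⁻¹)
        * ((1 - d) * (x * (1 - d)⁻¹) ^ 2 + 2 * (1 + d) * (x * (1 - d)⁻¹) + (1 - d)))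
  have key : (x * (1 - d)⁻¹)
        * ((1 - d) * (x * (1 - d)⁻¹) ^ 2 + 2 * (1 + d) * (x * (1 - d)⁻¹) + (1 - d))
      = x * (x ^ 2 + 2 * (1 + d) * x + (1 - d) ^ 2) * ((1 - d)⁻¹) ^ 2 := by
    field_simp
  rw [key, edw_aux_sq_mul _ _ (inv_ne_zero hc)]

open scoped Classical in
theorem edwards_legendre_isogenous_count (F : Type*) [Field F] [Fintype F] [DecidableEq F]
    (hF : ringChar F ≠ 2) (d : F) (hd0 : d ≠ 0) (hd1 : d ≠ 1) :
    ((Finset.univ.filter (fun p : F × F =>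
        p.1 ^ 2 + p.2 ^ 2 = 1 + d * p.1 ^ 2 * p.2 ^ 2)).card : ℤ)
      + 2 + 2 * quadraticChar F d
      = 1 + ((Finset.univ.filter (fun p : F × F =>
          p.2 ^ 2 = p.1 * (p.1 - 1) * (p.1 - d))).card : ℤ) := by
  have h2 : (2 : F) ≠ 0 := Ring.two_ne_zero hF
  -- Edwards affine count
  have hE : ((Finset.univ.filter (fun p : F × F =>
        p.1 ^ 2 + p.2 ^ 2 = 1 + d * p.1 ^ 2 * p.2 ^ 2)).card : ℤ)
      = (∑ x : F, quadraticChar F ((1 - x ^ 2) * (1 - d * x ^ 2)))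
        + (Fintype.card F : ℤ) - (quadraticChar F d + 1) := by
    have hsplit : ((Finset.univ.filter (fun p : F × F =>
          p.1 ^ 2 + p.2 ^ 2 = 1 + d * p.1 ^ 2 * p.2 ^ 2)).card : ℤ)
        = ∑ x : F, ((Finset.univ.filter
            (fun y : F => x ^ 2 + y ^ 2 = 1 + d * x ^ 2 * y ^ 2)).card : ℤ) := by
      rw [Finset.card_filter]
      push_cast
      rw [Fintype.sum_prod_type]
      refine Finset.sum_congr rfl fun x _ => ?_
      rw [Finset.card_filter]
      push_cast
      rfl
    rw [hsplit]
    have hEx : ∀ x : F, ((Finset.univ.filter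
          (fun y : F => x ^ 2 + y ^ 2 = 1 + d * x ^ 2 * y ^ 2)).card : ℤ)
        = quadraticChar F ((1 - x ^ 2) * (1 - d * x ^ 2))
          + (if d * x ^ 2 = 1 then 0 else 1) := by
      intro x
      by_cases h : d * x ^ 2 = 1
      · rw [if_pos h]
        have hx2 : (1 : F) - d * x ^ 2 = 0 := by rw [h]; ring
        have hempty : (Finset.univ.filter
            (fun y : F => x ^ 2 + y ^ 2 = 1 + d * x ^ 2 * y ^ 2)) = ∅ := by
          ext y
          simp only [Finset.mem_filter, Finset.mem_univ, true_and, Finset.notMem_empty,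
            iff_false]
          intro hy
          have hx1 : x ^ 2 = 1 := by linear_combination hy + y ^ 2 * h
          exact hd1 (by linear_combination h - d * hx1)
        rw [hempty, hx2]
        simp
      · rw [if_neg h]
        have he : (1 : F) - d * x ^ 2 ≠ 0 := fun h0 => h (by linear_combination -h0)
        have hset : (Finset.univ.filter
              (fun y : F => x ^ 2 + y ^ 2 = 1 + d * x ^ 2 * y ^ 2))
            = Finset.univ.filter
              (fun y : F => y ^ 2 = (1 - x ^ 2) * (1 - d * x ^ 2)⁻¹) := by
          ext y
          simp only [Finset.mem_filter, Finset.mem_univ, true_and]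
          constructor
          · intro hy
            rw [eq_mul_inv_iff_mul_eq₀ he]
            linear_combination hy
          · intro hy
            have hy' : y ^ 2 * (1 - d * x ^ 2) = 1 - x ^ 2 := by
              rw [eq_mul_inv_iff_mul_eq₀ he] at hy
              linear_combination hy
            linear_combination hy'
        rw [hset, edw_aux_card_sqrts hF]
        have : (1 - x ^ 2) * (1 - d * x ^ 2)⁻¹
            = (1 - x ^ 2) * (1 - d * x ^ 2) * ((1 - d * x ^ 2)⁻¹) ^ 2 := by
          field_simp
        rw [this, edw_aux_sq_mul _ _ (inv_ne_zero he)]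
    rw [Finset.sum_congr rfl fun x _ => hEx x, Finset.sum_add_distrib]
    have hite : ∑ x : F, (if d * x ^ 2 = 1 then (0 : ℤ) else 1)
        = (Fintype.card F : ℤ) - (quadraticChar F d + 1) := by
      have h1 : ∀ x : F, (if d * x ^ 2 = 1 then (0 : ℤ) else 1)
          = 1 - (if x ^ 2 = d⁻¹ then 1 else 0) := by
        intro x
        have hiff : d * x ^ 2 = 1 ↔ x ^ 2 = d⁻¹ := by
          constructor
          · intro h; exact eq_inv_of_mul_eq_one_left (by linear_combination h)
          · intro hx; rw [hx, mul_inv_cancel₀ hd0]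
        by_cases h : d * x ^ 2 = 1
        · rw [if_pos h, if_pos (hiff.mp h)]; ring
        · rw [if_neg h, if_neg (fun hc => h (hiff.mpr hc))]; ring
      rw [Finset.sum_congr rfl fun x _ => h1 x, Finset.sum_sub_distrib]
      rw [Finset.sum_boole]
      rw [Finset.sum_const, Finset.card_univ, nsmul_eq_mul, mul_one]
      have hinv : quadraticChar F d⁻¹ = quadraticChar F d := by
        rw [show (d⁻¹ : F) = d * (d⁻¹) ^ 2 by field_simp,
          edw_aux_sq_mul _ _ (inv_ne_zero hd0)]
      rw [edw_aux_card_sqrts hF, hinv]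
    rw [hite]
    ring
  -- Legendre affine count
  have hL : ((Finset.univ.filter (fun p : F × F =>
        p.2 ^ 2 = p.1 * (p.1 - 1) * (p.1 - d))).card : ℤ)
      = (∑ x : F, quadraticChar F (x * (x - 1) * (x - d))) + (Fintype.card F : ℤ) := by
    have hsplit : ((Finset.univ.filter (fun p : F × F =>
          p.2 ^ 2 = p.1 * (p.1 - 1) * (p.1 - d))).card : ℤ)
        = ∑ x : F, ((Finset.univ.filter
            (fun y : F => y ^ 2 = x * (x - 1) * (x - d))).card : ℤ) := by
      rw [Finset.card_filter]
      push_cast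
      rw [Fintype.sum_prod_type]
      refine Finset.sum_congr rfl fun x _ => ?_
      rw [Finset.card_filter]
      push_cast
      rfl
    rw [hsplit,
      Finset.sum_congr rfl fun x _ => edw_aux_card_sqrts hF (x * (x - 1) * (x - d)),
      Finset.sum_add_distrib, Finset.sum_const, Finset.card_univ, nsmul_eq_mul, mul_one]
  -- the chain of character-sum identities
  have hA := edw_aux_stepA hF d
  have hB := edw_aux_stepB d hd1
  have hC : ∑ x : F, quadraticChar F (x * (x ^ 2 + 2 * (1 + d) * x + (1 - d) ^ 2))
      = ∑ x : F, quadraticChar F (x * (x - 1) * (x - d)) := by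
    have := edw_aux_isog hF (-(1 + d)) d hd0
    have hl : ∑ x : F, quadraticChar F (x * (x ^ 2 + -(1 + d) * x + d))
        = ∑ x : F, quadraticChar F (x * (x - 1) * (x - d)) := by
      refine Finset.sum_congr rfl fun x _ => ?_
      congr 1
      ring
    have hr : ∑ t : F, quadraticChar F (t * (t ^ 2 - 2 * -(1 + d) * t + ((-(1 + d)) ^ 2 - 4 * d)))
        = ∑ x : F, quadraticChar F (x * (x ^ 2 + 2 * (1 + d) * x + (1 - d) ^ 2)) := by
      refine Finset.sum_congr rfl fun t _ => ?_
      congr 1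
      ring
    rw [← hl, this, hr]
  rw [hE, hL]
  have hfinal : ∑ x : F, quadraticChar F ((1 - x ^ 2) * (1 - d * x ^ 2))
      = ∑ x : F, quadraticChar F (x * (x - 1) * (x - d)) - quadraticChar F d := by
    rw [hA, hB, hC]
  rw [hfinal]
  ring
end

section
/- Let k be a field of characteristic ≠ 2 and d ∈ k with d ≠ 0, 1. The map (x,y) ↦ (1/x², y(d−1)/(x(1−y²))) sends every point (x,y) of the affine Edwards curve x²+y²=1+dx²y² with x ≠ 0 and y² ≠ 1 to a point of the Legendre curve Y² = X(X−1)(X−d). -/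
theorem edwards_to_legendre_map (k : Type*) [Field k] (hk : ringChar k ≠ 2)
    (d : k) (hd0 : d ≠ 0) (hd1 : d ≠ 1) (x y : k)
    (hE : x ^ 2 + y ^ 2 = 1 + d * x ^ 2 * y ^ 2) (hx : x ≠ 0) (hy : y ^ 2 ≠ 1) :
    (y * (d - 1) / (x * (1 - y ^ 2))) ^ 2
      = (1 / x ^ 2) * (1 / x ^ 2 - 1) * (1 / x ^ 2 - d) := by
  have hy' : 1 - y ^ 2 ≠ 0 := fun h => hy (by linear_combination -h)
  field_simp
  linear_combination ((y ^ 2 - d) * x ^ 2 + 1 - y ^ 2) * hE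
end

section
/- Let k be a field of characteristic ≠ 2 and d ∈ k with d ≠ 0, 1. The map (X,Y) ↦ (2Y/(d−X²), (Y²−X²(1−d))/(Y²+X²(1−d))) sends every point (X,Y) of the Legendre curve Y²=X(X−1)(X−d) with d ≠ X² and Y² ≠ −X²(1−d) to a point of the affine Edwards curve x²+y²=1+dx²y². -/
theorem legendre_to_edwards_map (k : Type*) [Field k] (hk : ringChar k ≠ 2)
    (d : k) (hd0 : d ≠ 0) (hd1 : d ≠ 1) (X Y : k)
    (hL : Y ^ 2 = X * (X - 1) * (X - d)) (hX : d ≠ X ^ 2)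
    (hY : Y ^ 2 ≠ -(X ^ 2 * (1 - d))) :
    (2 * Y / (d - X ^ 2)) ^ 2 + ((Y ^ 2 - X ^ 2 * (1 - d)) / (Y ^ 2 + X ^ 2 * (1 - d))) ^ 2
      = 1 + d * (2 * Y / (d - X ^ 2)) ^ 2
          * ((Y ^ 2 - X ^ 2 * (1 - d)) / (Y ^ 2 + X ^ 2 * (1 - d))) ^ 2 := by
  have h1 : d - X ^ 2 ≠ 0 := sub_ne_zero.mpr hX
  have h2 : Y ^ 2 + X ^ 2 * (1 - d) ≠ 0 := by
    intro h; exact hY (by linear_combination h)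
  field_simp
  linear_combination (4*Y^2*((1-d)*(Y^2 + X*(X-1)*(X-d)) + 2*(1+d)*X^2*(1-d))) * hL
end

section
/- Let k be a field of characteristic ≠ 2 and d ∈ k with d ≠ 0, 1. The map τ(x,y) = ((1−d)(1+y)/(1−y), 2(1−d)(1+y)/(x(1−y))) sends every point (x,y) of the affine Edwards curve x²+y²=1+dx²y² with x ≠ 0 and y ≠ 1 to a point of the Weierstrass curve Y² = X³ + 2(1+d)X² + (1−d)²X. -/
theorem edwards_to_weierstrass_map (k : Type*) [Field k] (hk : ringChar k ≠ 2)
    (d : k) (hd0 : d ≠ 0) (hd1 : d ≠ 1) (x y : k)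
    (hE : x ^ 2 + y ^ 2 = 1 + d * x ^ 2 * y ^ 2) (hx : x ≠ 0) (hy : y ≠ 1) :
    ((1 - d) * (2 * (1 + y)) / (x * (1 - y))) ^ 2
      = ((1 - d) * (1 + y) / (1 - y)) ^ 3
        + 2 * (1 + d) * ((1 - d) * (1 + y) / (1 - y)) ^ 2
        + (1 - d) ^ 2 * ((1 - d) * (1 + y) / (1 - y)) := by
  have hy' : 1 - y ≠ 0 := fun h => hy (by linear_combination -h)
  field_simp
  linear_combination (-4*(1+y)) * hE
end

section
/- Let k be a field of characteristic ≠ 2, d ∈ k \ {0,1} a square with chosen square root s (so s² = d, s ≠ 0). The map (x,y) ↦ (x/d, y/(d·s)) sends every point of the Legendre curve y²=x(x−1)(x−d) to a point of the Legendre curve y²=x(x−1)(x−1/d). -/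
theorem legendre_sigma2 (k : Type*) [Field k] (hk : ringChar k ≠ 2)
    (d : k) (hd0 : d ≠ 0) (hd1 : d ≠ 1) (s : k) (hs : s ^ 2 = d) (x y : k)
    (hL : y ^ 2 = x * (x - 1) * (x - d)) :
    (y / (d * s)) ^ 2 = (x / d) * (x / d - 1) * (x / d - 1 / d) := by
  have hs0 : s ≠ 0 := by rintro rfl; simp at hs; exact hd0 hs.symm
  field_simp
  ring_nf
  ring_nf at hL
  rw [hs]
  linear_combination d * hL
end

section
/- Let q be an odd prime power with q ≡ 3 (mod 4), and let d ∈ F_q be a root of d²−d+1=0 (a primitive 6th root of unity). Then d is a nonsquare in F_q, 1−d = 1/d, and ∑_{x∈F_q} χ(x(x−1)(x−d)) = −∑_{x∈F_q} χ(x(x−1)(x−1/d)). -/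
theorem legendre_j_zero (F : Type*) [Field F] [Fintype F] [DecidableEq F]
    (hq : Fintype.card F % 4 = 3) (d : F) (hd : d ^ 2 - d + 1 = 0) :
    ¬ IsSquare d ∧ 1 - d = 1 / d ∧
      (∑ x : F, quadraticChar F (x * (x - 1) * (x - d)))
        = -(∑ x : F, quadraticChar F (x * (x - 1) * (x - 1 / d))) := by
  have hF2 : ringChar F ≠ 2 := by
    intro h
    have : Fintype.card F % 2 = 1 := by omega
    have heven := FiniteField.even_card_of_char_two h
    omega
  have hd0 : d ≠ 0 := by
    intro h; rw [h] at hd; simp at hd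
  have hinv : 1 - d = 1 / d := by
    field_simp
    linear_combination -hd
  have hcube : d ^ 3 = -1 := by linear_combination (d + 1) * hd
  have hneg : ¬ IsSquare (-1 : F) := by
    rw [FiniteField.isSquare_neg_one_iff]
    simp [hq]
  have hnsq : ¬ IsSquare d := by
    rintro ⟨c, hc⟩
    apply hneg
    refine ⟨c ^ 3, ?_⟩
    rw [← hcube, hc]; ring
  refine ⟨hnsq, hinv, ?_⟩
  have hχneg : quadraticChar F (-1 : F) = -1 := by
    rw [quadraticChar_neg_one hF2]
    exact ZMod.χ₄_nat_three_mod_four hq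
  have hsum := Fintype.sum_bijective (fun y : F => d * y) (mulLeft_bijective₀ d hd0)
    (fun y : F => quadraticChar F (d * y * (d * y - 1) * (d * y - d)))
    (fun x : F => quadraticChar F (x * (x - 1) * (x - d))) (fun y => rfl)
  rw [← hsum]
  rw [← Finset.sum_neg_distrib]
  apply Finset.sum_congr rfl
  intro y _
  have harg : d * y * (d * y - 1) * (d * y - d) = (-1) * (y * (y - 1) * (y - 1 / d)) := by
    rw [← hinv]
    linear_combination ((d + 1) * y ^ 3 - (d + 2) * y ^ 2 + y) * hd
  rw [harg, map_mul, hχneg]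
  ring
end

section
/- Let q be an odd prime power with q ≡ 1 (mod 4) and d ∈ F_q \ {0,1}. If both d and 1−d are squares in F_q, then 16 divides the number of projective points of the Legendre curve y²=x(x−1)(x−d) over F_q (the group L_d(F_q) contains a subgroup isomorphic to Z/4 × Z/4). -/
namespace LegendreAux

open WeierstrassCurve WeierstrassCurve.Affine WeierstrassCurve.Affine.Point

/-- Coordinates of a point. -/
def coords {R : Type*} [CommRing R] {W : WeierstrassCurve.Affine R} :
    W.Point → Option (R × R)
  | .zero => none
  | .some (x := x) (y := y) _ => some (x, y)

lemma some_inj {R : Type*} [CommRing R] {W : WeierstrassCurve.Affine R} {x₁ y₁ x₂ y₂ : R}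
    {h₁ : W.Nonsingular x₁ y₁} {h₂ : W.Nonsingular x₂ y₂}
    (h : Point.some _ _ h₁ = Point.some _ _ h₂) : x₁ = x₂ ∧ y₁ = y₂ := by
  have := congrArg coords h
  simpa [coords] using this

lemma some_eq_some {R : Type*} [CommRing R] {W : WeierstrassCurve.Affine R} {x₁ y₁ x₂ y₂ : R}
    (h₁ : W.Nonsingular x₁ y₁) (h₂ : W.Nonsingular x₂ y₂) (hx : x₁ = x₂) (hy : y₁ = y₂) :
    Point.some _ _ h₁ = Point.some _ _ h₂ := by
  subst hx; subst hy; rfl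

variable {F : Type*} [Field F]

/-- The Legendre curve in Weierstrass form. -/
def Wc (d : F) : WeierstrassCurve.Affine F :=
  { a₁ := 0, a₂ := -(1 + d), a₃ := 0, a₄ := d, a₆ := 0 }

@[simp] lemma Wc_a₁ (d : F) : (Wc d).a₁ = 0 := rfl
@[simp] lemma Wc_a₂ (d : F) : (Wc d).a₂ = -(1 + d) := rfl
@[simp] lemma Wc_a₃ (d : F) : (Wc d).a₃ = 0 := rfl
@[simp] lemma Wc_a₄ (d : F) : (Wc d).a₄ = d := rfl
@[simp] lemma Wc_a₆ (d : F) : (Wc d).a₆ = 0 := rfl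

lemma Wc_equation (d x y : F) :
    (Wc d).Equation x y ↔ y ^ 2 = x * (x - 1) * (x - d) := by
  rw [equation_iff]
  simp only [Wc_a₁, Wc_a₂, Wc_a₃, Wc_a₄, Wc_a₆]
  constructor <;> intro h <;> linear_combination h

lemma Wc_delta (d : F) : (Wc d).Δ = 16 * d ^ 2 * (1 - d) ^ 2 := by
  simp only [WeierstrassCurve.Δ, WeierstrassCurve.b₂, WeierstrassCurve.b₄,
    WeierstrassCurve.b₆, WeierstrassCurve.b₈, Wc_a₁, Wc_a₂, Wc_a₃, Wc_a₄, Wc_a₆]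
  ring

lemma Wc_negY (d x y : F) : (Wc d).negY x y = -y := by
  simp [negY]

end LegendreAux

open LegendreAux WeierstrassCurve WeierstrassCurve.Affine WeierstrassCurve.Affine.Point in
theorem legendre_sixteen_divides (F : Type*) [Field F] [Fintype F] [DecidableEq F]
    (hq : Fintype.card F % 4 = 1) (d : F) (hd0 : d ≠ 0) (hd1 : d ≠ 1)
    (hsd : IsSquare d) (hsd' : IsSquare (1 - d)) :
    16 ∣ (1 + (Finset.univ.filter (fun p : F × F =>
        p.2 ^ 2 = p.1 * (p.1 - 1) * (p.1 - d))).card) := by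
  classical
  -- characteristic facts
  have hchar : ringChar F ≠ 2 := by
    intro h
    have := FiniteField.even_card_of_char_two h
    omega
  have h2 : (2 : F) ≠ 0 := Ring.two_ne_zero hchar
  obtain ⟨i, hi⟩ : IsSquare (-1 : F) :=
    FiniteField.isSquare_neg_one_iff.mpr (by omega)
  obtain ⟨s, hs⟩ := hsd
  obtain ⟨t, ht⟩ := hsd'
  have hi0 : i ≠ 0 := by
    rintro rfl
    rw [mul_zero] at hi
    exact (by norm_num : (-1 : F) ≠ 0) hi
  have hs0 : s ≠ 0 := by rintro rfl; exact hd0 (by simpa using hs)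
  have hs1 : s ≠ 1 := by rintro rfl; exact hd1 (by simpa using hs)
  have ht0 : t ≠ 0 := by rintro rfl; exact hd1 (by linear_combination -ht)
  have ht1 : (1 : F) + t ≠ 0 := by
    intro h
    exact hd0 (by linear_combination -ht + (1 - t) * h)
  -- the curve
  have hΔ : (Wc d).Δ ≠ 0 := by
    rw [Wc_delta]
    have h16 : (16 : F) ≠ 0 := by
      have := pow_ne_zero 4 h2
      norm_num at this
      exact this
    exact mul_ne_zero (mul_ne_zero h16 (pow_ne_zero 2 hd0))
      (pow_ne_zero 2 (sub_ne_zero.mpr (Ne.symm hd1)))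
  have hNS : ∀ {x y : F}, y ^ 2 = x * (x - 1) * (x - d) → (Wc d).Nonsingular x y :=
    fun h => ((Wc d).equation_iff_nonsingular_of_Δ_ne_zero hΔ).mp ((Wc_equation d _ _).mpr h)
  -- point count via an equivalence
  let e : (Wc d).Point ≃ Option {p : F × F // p.2 ^ 2 = p.1 * (p.1 - 1) * (p.1 - d)} :=
    { toFun := fun P => match P with
        | .zero => none
        | .some (x := x) (y := y) h => some ⟨(x, y), (Wc_equation d x y).mp h.1⟩
      invFun := fun o => match o with
        | Option.none => Point.zero
        | Option.some ⟨(x, y), h⟩ => Point.some _ _ (hNS h)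
      left_inv := fun P => by cases P <;> rfl
      right_inv := fun o => by rcases o with _ | ⟨⟨x, y⟩, h⟩ <;> rfl }
  haveI : Finite (Wc d).Point := Finite.of_equiv _ e.symm
  have hcardpt : Nat.card (Wc d).Point =
      1 + (Finset.univ.filter (fun p : F × F =>
        p.2 ^ 2 = p.1 * (p.1 - 1) * (p.1 - d))).card := by
    rw [Nat.card_congr e, Nat.card_eq_fintype_card, Fintype.card_option,
      Fintype.card_subtype, add_comm]
  -- negation basics
  have hyne : ∀ {x y : F}, y ≠ 0 → y ≠ (Wc d).negY x y := by
    intro x y hy h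
    rw [Wc_negY] at h
    apply hy
    have h2y : 2 * y = 0 := by linear_combination h
    rcases mul_eq_zero.mp h2y with h' | h'
    · exact absurd h' h2
    · exact h'
  -- the two-torsion points
  have hT0 : (Wc d).Nonsingular 0 0 := hNS (by ring)
  have hT1 : (Wc d).Nonsingular 1 0 := hNS (by ring)
  have hTd : (Wc d).Nonsingular d 0 := hNS (by ring)
  -- the doubling homomorphism
  let φ : (Wc d).Point →+ (Wc d).Point :=
    AddMonoidHom.mk' (fun P => P + P) (fun a b => by abel)
  have hφ : ∀ P : (Wc d).Point, φ P = P + P := fun _ => rfl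
  -- halving point for (0,0)
  have hQ0 : (Wc d).Nonsingular s (s * (s - 1) * i) :=
    hNS (by linear_combination (s * (s - 1)) * hs - (s ^ 2 * (s - 1) ^ 2) * hi)
  have hy0 : s * (s - 1) * i ≠ 0 :=
    mul_ne_zero (mul_ne_zero hs0 (sub_ne_zero.mpr hs1)) hi0
  have hL0 : (Wc d).slope s s (s * (s - 1) * i) (s * (s - 1) * i) = (s - 1) * i := by
    rw [slope_of_Y_ne rfl (hyne hy0), Wc_negY]
    rw [div_eq_iff (by rw [sub_neg_eq_add, ← two_mul]; exact mul_ne_zero h2 hy0)]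
    simp only [Wc_a₁, Wc_a₂, Wc_a₄]
    linear_combination (1 - 2 * s) * hs + (2 * s * (s - 1) ^ 2) * hi
  have hdbl0 : φ (Point.some _ _ hQ0) = Point.some _ _ hT0 := by
    rw [hφ, add_self_of_Y_ne (hyne hy0)]
    refine some_eq_some _ _ ?_ ?_
    · rw [hL0]
      simp only [addX, Wc_a₁, Wc_a₂]
      linear_combination hs - ((s - 1) ^ 2) * hi
    · rw [hL0]
      simp only [addY, negAddY, addX, negY, Wc_a₁, Wc_a₂, Wc_a₃]
      linear_combination (-(s - 1) * i) * hs + ((s - 1) ^ 3 * i) * hi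
  -- halving point for (1,0)
  have hQ1 : (Wc d).Nonsingular (1 + t) (t * (1 + t)) :=
    hNS (by linear_combination (-(t * (1 + t))) * ht)
  have hy1 : t * (1 + t) ≠ 0 := mul_ne_zero ht0 ht1
  have hL1 : (Wc d).slope (1 + t) (1 + t) (t * (1 + t)) (t * (1 + t)) = 1 + t := by
    rw [slope_of_Y_ne rfl (hyne hy1), Wc_negY]
    rw [div_eq_iff (by rw [sub_neg_eq_add, ← two_mul]; exact mul_ne_zero h2 hy1)]
    simp only [Wc_a₁, Wc_a₂, Wc_a₄]
    linear_combination (2 * t + 1) * ht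
  have hdbl1 : φ (Point.some _ _ hQ1) = Point.some _ _ hT1 := by
    rw [hφ, add_self_of_Y_ne (hyne hy1)]
    refine some_eq_some _ _ ?_ ?_
    · rw [hL1]
      simp only [addX, Wc_a₁, Wc_a₂]
      linear_combination -ht
    · rw [hL1]
      simp only [addY, negAddY, addX, negY, Wc_a₁, Wc_a₂, Wc_a₃]
      linear_combination (1 + t) * ht
  -- (0,0) + (1,0) = (d,0)
  have hslope01 : (Wc d).slope 0 1 0 0 = 0 := by
    rw [slope_of_X_ne (by norm_num)]
    simp
  have hadd01 : (Point.some _ _ hT0 : (Wc d).Point) + Point.some _ _ hT1 = Point.some _ _ hTd := by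
    rw [add_of_X_ne (by norm_num : (0 : F) ≠ 1)]
    refine some_eq_some _ _ ?_ ?_
    · rw [hslope01]
      simp only [addX, Wc_a₁, Wc_a₂]
      ring
    · rw [hslope01]
      simp only [addY, negAddY, addX, negY, Wc_a₁, Wc_a₂, Wc_a₃]
      ring
  -- kernel of doubling
  have hker_set : (φ.ker : Set (Wc d).Point) =
      {0, Point.some _ _ hT0, Point.some _ _ hT1, Point.some _ _ hTd} := by
    ext P
    simp only [SetLike.mem_coe, AddMonoidHom.mem_ker, Set.mem_insert_iff, Set.mem_singleton_iff]
    constructor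
    · intro hP
      rw [hφ] at hP
      rcases P with _ | @⟨x, y, h⟩
      · exact Or.inl rfl
      · by_cases hy : y = (Wc d).negY x y
        · rw [Wc_negY] at hy
          have hy0' : y = 0 := by
            have h2y : 2 * y = 0 := by linear_combination hy
            rcases mul_eq_zero.mp h2y with h' | h'
            · exact absurd h' h2
            · exact h'
          subst hy0'
          have heq := (Wc_equation d x 0).mp h.1
          have : x * (x - 1) * (x - d) = 0 := by linear_combination -heq
          rcases mul_eq_zero.mp this with h' | h'
          · rcases mul_eq_zero.mp h' with h'' | h''
            · exact Or.inr (Or.inl (some_eq_some _ _ h'' rfl))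
            · exact Or.inr (Or.inr (Or.inl
                (some_eq_some _ _ (by linear_combination h'') rfl)))
          · exact Or.inr (Or.inr (Or.inr
              (some_eq_some _ _ (by linear_combination h') rfl)))
        · rw [add_self_of_Y_ne hy] at hP
          exact absurd hP (some_ne_zero _)
    · intro hP
      have hzero : ∀ {x : F} (h : (Wc d).Nonsingular x 0),
          (Point.some _ _ h : (Wc d).Point) + Point.some _ _ h = 0 := by
        intro x h
        exact add_of_Y_eq rfl (by rw [Wc_negY]; ring)
      rcases hP with rfl | rfl | rfl | rfl
      · simp [hφ]
      · rw [hφ]; exact hzero hT0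
      · rw [hφ]; exact hzero hT1
      · rw [hφ]; exact hzero hTd
  -- distinctness
  have hne01 : (Point.some _ _ hT0 : (Wc d).Point) ≠ Point.some _ _ hT1 := by
    intro h; exact zero_ne_one (some_inj h).1
  have hne0d : (Point.some _ _ hT0 : (Wc d).Point) ≠ Point.some _ _ hTd := by
    intro h; exact hd0 ((some_inj h).1.symm)
  have hne1d : (Point.some _ _ hT1 : (Wc d).Point) ≠ Point.some _ _ hTd := by
    intro h; exact hd1 ((some_inj h).1.symm)
  have hker_card : Nat.card φ.ker = 4 := by
    have := Nat.card_congr (Equiv.setCongr hker_set)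
    rw [show Nat.card φ.ker = Nat.card ((φ.ker : Set (Wc d).Point)) from rfl, this,
      Nat.card_coe_set_eq _]
    rw [Set.ncard_insert_of_notMem (by
        simp only [Set.mem_insert_iff, Set.mem_singleton_iff]
        push_neg
        exact ⟨(some_ne_zero hT0).symm, (some_ne_zero hT1).symm, (some_ne_zero hTd).symm⟩)]
    rw [Set.ncard_insert_of_notMem (by
        simp only [Set.mem_insert_iff, Set.mem_singleton_iff]
        push_neg
        exact ⟨hne01, hne0d⟩)]
    rw [Set.ncard_pair hne1d]
  -- kernel is contained in the range
  have hle : φ.ker ≤ φ.range := by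
    intro P hP
    have : P ∈ (φ.ker : Set (Wc d).Point) := hP
    rw [hker_set] at this
    rcases this with rfl | rfl | rfl | rfl
    · exact ⟨0, map_zero φ⟩
    · exact ⟨Point.some _ _ hQ0, hdbl0⟩
    · exact ⟨Point.some _ _ hQ1, hdbl1⟩
    · exact ⟨Point.some _ _ hQ0 + Point.some _ _ hQ1, by rw [map_add, hdbl0, hdbl1, hadd01]⟩
  -- count
  have h4dvd : 4 ∣ Nat.card φ.range := by
    rw [← hker_card]
    exact AddSubgroup.card_dvd_of_le hle
  obtain ⟨k, hk⟩ := h4dvd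
  have hmain : Nat.card (Wc d).Point = 16 * k := by
    rw [AddSubgroup.card_eq_card_quotient_mul_card_addSubgroup φ.ker,
      Nat.card_congr (QuotientAddGroup.quotientKerEquivRange φ).toEquiv, hker_card, hk]
    ring
  rw [← hcardpt, hmain]
  exact ⟨k, rfl⟩
end

section
/- Let q be an odd prime power and d ∈ F_q \ {0,1}. If d is a square in F_q, then 8 divides the number of projective points of the Legendre curve y²=x(x−1)(x−d) over F_q. -/
open WeierstrassCurve WeierstrassCurve.Affine WeierstrassCurve.Affine.Point

noncomputable section

namespace LegendreEight

variable {F : Type*} [Field F]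

def Wc (d : F) : WeierstrassCurve.Affine F :=
  { a₁ := 0, a₂ := -(1+d), a₃ := 0, a₄ := d, a₆ := 0 }

lemma Wc_equation {d x y : F} : (Wc d).Equation x y ↔ y^2 = x*(x-1)*(x-d) := by
  rw [WeierstrassCurve.Affine.equation_iff]
  simp only [Wc]
  constructor <;> intro h <;> linear_combination h

lemma Wc_Δ (d : F) : (Wc d).Δ = 16*(d*(1-d))^2 := by
  simp only [WeierstrassCurve.Δ, WeierstrassCurve.b₂, WeierstrassCurve.b₄, WeierstrassCurve.b₆,
    WeierstrassCurve.b₈, Wc]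
  ring

lemma Wc_Δ_ne {d : F} (h2 : (2:F) ≠ 0) (hd0 : d ≠ 0) (hd1 : d ≠ 1) : (Wc d).Δ ≠ 0 := by
  rw [Wc_Δ]
  have h16 : (16:F) ≠ 0 := by
    have : (16:F) = 2^4 := by norm_num
    rw [this]
    exact pow_ne_zero _ h2
  exact mul_ne_zero h16 (pow_ne_zero _ (mul_ne_zero hd0 (sub_ne_zero_of_ne hd1.symm)))

lemma Wc_nonsingular {d x y : F} (h2 : (2:F) ≠ 0) (hd0 : d ≠ 0) (hd1 : d ≠ 1)
    (h : y^2 = x*(x-1)*(x-d)) : (Wc d).Nonsingular x y :=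
  (WeierstrassCurve.Affine.equation_iff_nonsingular_of_Δ_ne_zero (W := Wc d)
    (Wc_Δ_ne h2 hd0 hd1)).mp (Wc_equation.mpr h)

def toCoords {d : F} : (Wc d).Point → Option (F × F)
  | .zero => none
  | .some (x := x) (y := y) _ => Option.some (x, y)

lemma toCoords_injective {d : F} : Function.Injective (toCoords (d := d)) := by
  rintro (_ | @⟨x1, y1, h1⟩) (_ | @⟨x2, y2, h2⟩) h
  · rfl
  · simp [toCoords] at h
  · simp [toCoords] at h
  · simp only [toCoords, Option.some.injEq, Prod.mk.injEq] at h
    obtain ⟨rfl, rfl⟩ := h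
    rfl

lemma some_eq_some {d x1 y1 x2 y2 : F} (h1 : (Wc d).Nonsingular x1 y1)
    (h2 : (Wc d).Nonsingular x2 y2) (hx : x1 = x2) (hy : y1 = y2) :
    Point.some _ _ h1 = Point.some _ _ h2 := by subst hx; subst hy; rfl

lemma coords_of_some_eq {d x1 y1 x2 y2 : F} {h1 : (Wc d).Nonsingular x1 y1}
    {h2 : (Wc d).Nonsingular x2 y2} (h : Point.some _ _ h1 = Point.some _ _ h2) :
    x1 = x2 ∧ y1 = y2 := by
  have := congrArg toCoords h
  simpa [toCoords] using this

lemma Wc_negY {d x y : F} : (Wc d).negY x y = -y := by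
  simp [WeierstrassCurve.Affine.negY, Wc]

lemma double_eq [DecidableEq F] {d px py x0 : F} (h2 : (2:F) ≠ 0) (hd0 : d ≠ 0) (hd1 : d ≠ 1)
    (hE : py^2 = px*(px-1)*(px-d)) (hpy : py ≠ 0)
    (hroot : x0*(x0-1)*(x0-d) = 0)
    (hkey : (3*px^2 - 2*(1+d)*px + d)^2 = (x0 - (1+d) + 2*px) * (4*py^2)) :
    ∃ (hP : (Wc d).Nonsingular px py) (hQ : (Wc d).Nonsingular x0 0),
      Point.some _ _ hP + Point.some _ _ hP = Point.some _ _ hQ := by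
  have hP := Wc_nonsingular h2 hd0 hd1 hE
  have hy : py ≠ (Wc d).negY px py := by
    rw [Wc_negY]
    intro h
    have h0 : 2*py = 0 := by linear_combination h
    exact hpy ((mul_eq_zero.mp h0).resolve_left h2)
  have hLval : (Wc d).slope px px py py = (3*px^2 - 2*(1+d)*px + d) / (2*py) := by
    rw [slope_of_Y_ne rfl hy, Wc_negY]
    simp only [Wc]
    ring_nf
  have hx : (Wc d).addX px px ((Wc d).slope px px py py) = x0 := by
    rw [WeierstrassCurve.Affine.addX, hLval]
    simp only [Wc]
    have h2py : (2*py) ≠ 0 := mul_ne_zero h2 hpy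
    field_simp
    linear_combination hkey
  have hN := WeierstrassCurve.Affine.nonsingular_add (W := Wc d) hP hP (fun hxy => hy hxy.right)
  have hEq := hN.left
  rw [← hx] at hroot
  have hy0 : (Wc d).addY px px py ((Wc d).slope px px py py) = 0 := by
    have := Wc_equation.mp hEq
    rw [hroot] at this
    exact pow_eq_zero_iff (by norm_num) |>.mp this
  rw [hx] at hroot
  have hQ : (Wc d).Nonsingular x0 0 := Wc_nonsingular h2 hd0 hd1 (by rw [hroot]; ring)
  refine ⟨hP, hQ, ?_⟩
  rw [WeierstrassCurve.Affine.Point.add_self_of_Y_ne hy]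
  exact some_eq_some _ _ hx hy0

lemma eight_dvd [Fintype F] [DecidableEq F] {d px py x0 t1 : F} (h2 : (2:F) ≠ 0) (hd0 : d ≠ 0) (hd1 : d ≠ 1)
    (hE : py^2 = px*(px-1)*(px-d)) (hpy : py ≠ 0)
    (hroot : x0*(x0-1)*(x0-d) = 0)
    (hkey : (3*px^2 - 2*(1+d)*px + d)^2 = (x0 - (1+d) + 2*px) * (4*py^2))
    (ht1 : t1*(t1-1)*(t1-d) = 0) (hne : x0 ≠ t1) :
    8 ∣ Nat.card (Wc d).Point := by
  obtain ⟨hP, hQ, hPP⟩ := double_eq h2 hd0 hd1 hE hpy hroot hkey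
  haveI : Finite (Wc d).Point := Finite.of_injective _ (toCoords_injective (d := d))
  set P := Point.some _ _ hP with hPdef
  set Q := Point.some _ _ hQ with hQdef
  have hT : (Wc d).Nonsingular t1 0 := Wc_nonsingular h2 hd0 hd1 (by rw [ht1]; ring)
  set T := Point.some _ _ hT with hTdef
  have hQQ : Q + Q = 0 := add_self_of_Y_eq (by rw [Wc_negY]; ring)
  have hTT : T + T = 0 := add_self_of_Y_eq (by rw [Wc_negY]; ring)
  have h4P : ((4:ℕ):ℤ) • P = 0 := by
    have h4 : ((4:ℕ):ℤ) • P = (P + P) + (P + P) := by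
      rw [show ((4:ℕ):ℤ) = 2 + 2 by norm_num, add_smul, two_zsmul]
    rw [h4, hPP, hQQ]
  have h2T : ((2:ℕ):ℤ) • T = 0 := by
    rw [show ((2:ℕ):ℤ) = 2 by norm_num, two_zsmul, hTT]
  let f1 : ZMod 4 →+ (Wc d).Point :=
    ZMod.lift 4 ⟨zmultiplesHom _ P, h4P⟩
  let f2 : ZMod 2 →+ (Wc d).Point :=
    ZMod.lift 2 ⟨zmultiplesHom _ T, h2T⟩
  let f : ZMod 4 × ZMod 2 →+ (Wc d).Point :=
    f1.comp (AddMonoidHom.fst _ _) + f2.comp (AddMonoidHom.snd _ _)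
  have hf1 : ∀ n : ZMod 4, f1 n = n.val • P := by
    intro n
    conv_lhs => rw [← ZMod.natCast_rightInverse n]
    rw [show ((n.val : ℕ) : ZMod 4) = ((n.val : ℤ) : ZMod 4) by push_cast; rfl, ZMod.lift_coe]
    show ((n.val : ℤ) • P) = n.val • P
    exact natCast_zsmul P n.val
  have hf2 : ∀ n : ZMod 2, f2 n = n.val • T := by
    intro n
    conv_lhs => rw [← ZMod.natCast_rightInverse n]
    rw [show ((n.val : ℕ) : ZMod 2) = ((n.val : ℤ) : ZMod 2) by push_cast; rfl, ZMod.lift_coe]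
    show ((n.val : ℤ) • T) = n.val • T
    exact natCast_zsmul T n.val
  have hP0 : P ≠ 0 := some_ne_zero _
  have hT0 : T ≠ 0 := some_ne_zero _
  have hQ0 : Q ≠ 0 := some_ne_zero _
  have hPT : P ≠ T := fun h => hpy (coords_of_some_eq h).2
  have hQT : Q ≠ -T := by
    intro h
    rw [neg_some] at h
    exact hne (coords_of_some_eq h).1
  have hPnT : P ≠ -T := by
    intro h
    rw [neg_some] at h
    apply hpy
    rw [(coords_of_some_eq h).2, Wc_negY, _root_.neg_zero]
  have h3 : Q + P = -P := by
    apply eq_neg_of_add_eq_zero_left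
    rw [add_assoc, hPP, hQQ]
  have key : ∀ m k : ℕ, m < 4 → k < 2 → m • P + k • T = 0 → m = 0 ∧ k = 0 := by
    intro m k hm hk h
    interval_cases m <;> interval_cases k <;>
      simp only [show (3:ℕ) = 2 + 1 from rfl, show (2:ℕ) = 1 + 1 from rfl, add_nsmul,
        one_nsmul, zero_nsmul, add_zero, zero_add] at h
    · exact ⟨rfl, rfl⟩
    · exact absurd h hT0
    · exact absurd h hP0
    · exact absurd (eq_neg_of_add_eq_zero_left h) hPnT
    · rw [hPP] at h
      exact absurd h hQ0
    · rw [hPP] at h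
      exact absurd (eq_neg_of_add_eq_zero_left h) hQT
    · rw [hPP, h3] at h
      exact absurd (neg_eq_zero.mp h) hP0
    · rw [hPP, h3] at h
      exact absurd (neg_add_eq_zero.mp h) hPT
  have hf : Function.Injective f := by
    rw [injective_iff_map_eq_zero]
    rintro ⟨a, b⟩ hab
    have hab' : a.val • P + b.val • T = 0 := by
      have heval : f (a, b) = f1 a + f2 b := rfl
      rw [heval, hf1, hf2] at hab
      exact hab
    obtain ⟨ha, hb⟩ := key a.val b.val a.val_lt b.val_lt hab'
    have ha' : a = 0 := (ZMod.val_eq_zero a).mp ha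
    have hb' : b = 0 := (ZMod.val_eq_zero b).mp hb
    rw [ha', hb']
    rfl
  have hrange : Nat.card f.range = 8 := by
    have hcongr := Nat.card_congr (AddMonoidHom.ofInjective hf).toEquiv
    rw [← hcongr]
    simp [Nat.card_eq_fintype_card]
  have hdvd := AddSubgroup.card_addSubgroup_dvd_card f.range
  rwa [hrange] at hdvd

lemma card_point [Fintype F] [DecidableEq F] {d : F} (h2 : (2:F) ≠ 0) (hd0 : d ≠ 0)
    (hd1 : d ≠ 1) :
    Nat.card (Wc d).Point = 1 + (Finset.univ.filter (fun p : F × F =>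
      p.2 ^ 2 = p.1 * (p.1 - 1) * (p.1 - d))).card := by
  set S := {p : F × F // p.2 ^ 2 = p.1 * (p.1 - 1) * (p.1 - d)} with hS
  let g : Option S → (Wc d).Point := fun o =>
    o.elim 0 (fun s => Point.some _ _ (Wc_nonsingular h2 hd0 hd1 s.2))
  have hinj : Function.Injective g := by
    rintro (_ | ⟨⟨x1, y1⟩, p1⟩) (_ | ⟨⟨x2, y2⟩, p2⟩) h
    · rfl
    · exact absurd h.symm (some_ne_zero _)
    · exact absurd h (some_ne_zero _)
    · obtain ⟨hx, hy⟩ := coords_of_some_eq h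
      subst hx; subst hy; rfl
  have hsurj : Function.Surjective g := by
    rintro (_ | @⟨x, y, hn⟩)
    · exact ⟨none, rfl⟩
    · exact ⟨Option.some ⟨(x, y), Wc_equation.mp hn.1⟩, some_eq_some _ _ rfl rfl⟩
  rw [← Nat.card_eq_of_bijective g ⟨hinj, hsurj⟩, Finite.card_option, Nat.card_eq_fintype_card,
    Fintype.card_subtype, Nat.add_comm]

lemma nonsquare_mul [Fintype F] [DecidableEq F] {a b : F} (ha0 : a ≠ 0) (hb0 : b ≠ 0)
    (ha : ¬IsSquare a) (hb : ¬IsSquare b) : IsSquare (a*b) := by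
  have h1 : quadraticChar F a = -1 := quadraticChar_neg_one_iff_not_isSquare.mpr ha
  have h2 : quadraticChar F b = -1 := quadraticChar_neg_one_iff_not_isSquare.mpr hb
  have h3 : quadraticChar F (a*b) = 1 := by rw [map_mul, h1, h2]; ring
  exact (quadraticChar_one_iff_isSquare (mul_ne_zero ha0 hb0)).mp h3

end LegendreEight

end

theorem legendre_eight_divides (F : Type*) [Field F] [Fintype F] [DecidableEq F]
    (hF : ringChar F ≠ 2) (d : F) (hd0 : d ≠ 0) (hd1 : d ≠ 1) (hsd : IsSquare d) :
    8 ∣ (1 + (Finset.univ.filter (fun p : F × F =>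
        p.2 ^ 2 = p.1 * (p.1 - 1) * (p.1 - d))).card) := by
  have h2 : (2:F) ≠ 0 := Ring.two_ne_zero hF
  obtain ⟨e, hd⟩ := hsd
  subst hd
  rw [← LegendreEight.card_point h2 hd0 hd1]
  have he0 : e ≠ 0 := fun h => hd0 (by rw [h]; ring)
  have he1 : e ≠ 1 := fun h => hd1 (by rw [h]; ring)
  by_cases hi : IsSquare (-1 : F)
  · obtain ⟨i, hi⟩ := hi
    have hi0 : i ≠ 0 := by intro h; rw [h] at hi; norm_num at hi
    refine LegendreEight.eight_dvd (px := e) (py := i*e*(e-1)) (x0 := 0) (t1 := 1)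
      h2 hd0 hd1 ?_ ?_ (by ring) ?_ (by ring) zero_ne_one
    · linear_combination (-(e*(e-1))^2) * hi
    · exact mul_ne_zero (mul_ne_zero hi0 he0) (sub_ne_zero_of_ne he1)
    · linear_combination (4*(2*e-1-e^2)*(e*(e-1))^2) * hi
  · by_cases hs2 : IsSquare (1 - e*e)
    · obtain ⟨t, ht⟩ := hs2
      have ht0 : t ≠ 0 := by
        intro h
        rw [h] at ht
        exact hd1 (by linear_combination -ht)
      have h1t : (1:F) + t ≠ 0 := by
        intro h
        apply hd0
        have ht' : t = -1 := by linear_combination h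
        rw [ht'] at ht
        linear_combination -ht
      refine LegendreEight.eight_dvd (px := 1+t) (py := t*(1+t)) (x0 := 1) (t1 := 0)
        h2 hd0 hd1 ?_ (mul_ne_zero ht0 h1t) (by ring) ?_ (by ring) one_ne_zero
      · linear_combination (-(t*(1+t))) * ht
      · linear_combination (1 - e^2 + 8*t - 4*t*e^2 + 15*t^2 - 4*t^2*e^2 + 8*t^3) * ht
    · have hs3 : IsSquare (e*e - 1) := by
        have hne1 : (1:F) - e*e ≠ 0 := fun h => hd1 (by linear_combination -h)
        have hmul := LegendreEight.nonsquare_mul (neg_ne_zero.mpr (one_ne_zero (α := F))) hne1 hi hs2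
        rwa [show (-1:F)*(1-e*e) = e*e-1 by ring] at hmul
      obtain ⟨u, hu⟩ := hs3
      have hu0 : u ≠ 0 := by
        intro h
        rw [h] at hu
        exact hd1 (by linear_combination hu)
      have heu : e + u ≠ 0 := by
        intro h
        exact one_ne_zero (α := F) (by linear_combination (-1)*hu + (e-u)*h)
      refine LegendreEight.eight_dvd (px := e*e + e*u) (py := e*u*(e+u)) (x0 := e*e) (t1 := 0)
        h2 hd0 hd1 ?_ (mul_ne_zero (mul_ne_zero he0 hu0) heu) (by ring) ?_ (by ring) hd0
      · linear_combination (-(e^2*u^2) - e^3*u) * hu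
      · linear_combination (-4*e^2*u^2 - 4*e^3*u + 8*e^3*u^3 - e^4 + 15*e^4*u^2 + 8*e^5*u + e^6) * hu
end

section
/- Let q ≡ 1 (mod 4) be an odd prime power and A an integer with q+1−A ≡ 0 (mod 8) (hence q+1+A ≡ 4 (mod 8)). Then every d ∈ F_q \ {0,1} with −∑_{x∈F_q} χ(x(x−1)(x−d)) = −A is a nonsquare in F_q. -/
set_option linter.unusedSectionVars false
set_option maxHeartbeats 1000000

open WeierstrassCurve.Affine

section Aux

variable {F : Type*} [Field F] [Fintype F] [DecidableEq F]

def myW (d : F) : WeierstrassCurve.Affine F := { a₁ := 0, a₂ := -(1+d), a₃ := 0, a₄ := d, a₆ := 0 }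

lemma myW_equation_iff (d x y : F) : (myW d).Equation x y ↔ y ^ 2 = x * (x - 1) * (x - d) := by
  rw [WeierstrassCurve.Affine.equation_iff]
  show y ^ 2 + 0 * x * y + 0 * y = x ^ 3 + -(1+d) * x ^ 2 + d * x + 0 ↔ _
  constructor <;> intro h <;> linear_combination h

lemma myW_Δ (d : F) : (myW d).Δ = 16 * d ^ 2 * (d - 1) ^ 2 := by
  simp only [WeierstrassCurve.Δ, WeierstrassCurve.b₂, WeierstrassCurve.b₄, WeierstrassCurve.b₆,
    WeierstrassCurve.b₈, myW]
  ring

lemma myW_negY (d x y : F) : (myW d).negY x y = -y := by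
  simp [WeierstrassCurve.Affine.negY, myW]

noncomputable def myEquiv (d : F) (hD : (myW d).Δ ≠ 0) :
    (myW d).Point ≃ Option {p : F × F // (myW d).Equation p.1 p.2} where
  toFun P := match P with
    | .zero => none
    | @WeierstrassCurve.Affine.Point.some _ _ _ x y h => some ⟨(x, y), h.1⟩
  invFun o := match o with
    | none => .zero
    | some ⟨(x, y), h⟩ => .some _ _ ((WeierstrassCurve.Affine.equation_iff_nonsingular_of_Δ_ne_zero (W := myW d) hD).mp h)
  left_inv := by rintro (_ | _) <;> rfl
  right_inv := by rintro (_ | ⟨⟨x, y⟩, h⟩) <;> rfl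

lemma card_sq (hF2 : ringChar F ≠ 2) (a : F) :
    (Fintype.card {y : F // y ^ 2 = a} : ℤ) = quadraticChar F a + 1 := by
  have h := quadraticChar_card_sqrts hF2 a
  rw [Set.toFinset_card] at h
  exact_mod_cast h

lemma myCard (d : F) (hD : (myW d).Δ ≠ 0) (hF2 : ringChar F ≠ 2) :
    (Nat.card (myW d).Point : ℤ) =
      (Fintype.card F : ℤ) + 1 + ∑ x : F, (quadraticChar F (x * (x - 1) * (x - d)) : ℤ) := by
  letI : DecidablePred fun p : F × F => (myW d).Equation p.1 p.2 := fun p =>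
    decidable_of_iff _ (myW_equation_iff d p.1 p.2).symm
  rw [Nat.card_congr (myEquiv d hD), Finite.card_option, Nat.card_eq_fintype_card]
  have e2 : {p : F × F // (myW d).Equation p.1 p.2} ≃
      Σ x : F, {y : F // y ^ 2 = x * (x - 1) * (x - d)} :=
    (Equiv.subtypeEquivRight fun p : F × F => myW_equation_iff d p.1 p.2).trans
      (Equiv.subtypeProdEquivSigmaSubtype fun x y => y ^ 2 = x * (x - 1) * (x - d))
  rw [Fintype.card_congr e2, Fintype.card_sigma]
  push_cast
  rw [Finset.sum_congr rfl fun x _ => card_sq hF2 (x * (x - 1) * (x - d)),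
    Finset.sum_add_distrib]
  simp [Finset.card_univ]
  ring

lemma some_eq_some {W : WeierstrassCurve.Affine F} {x1 y1 x2 y2 : F}
    (h1 : W.Nonsingular x1 y1) (h2 : W.Nonsingular x2 y2) (hx : x1 = x2) (hy : y1 = y2) :
    Point.some _ _ h1 = Point.some _ _ h2 := by subst hx; subst hy; rfl

lemma some_ne_some {W : WeierstrassCurve.Affine F} {x1 y1 x2 y2 : F}
    (h1 : W.Nonsingular x1 y1) (h2 : W.Nonsingular x2 y2) (hx : x1 ≠ x2) :
    Point.some _ _ h1 ≠ Point.some _ _ h2 := by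
  intro h
  injection h with h' _
  exact hx h'

end Aux

theorem trace_negA_nonsquare (F : Type*) [Field F] [Fintype F] [DecidableEq F]
    (hq : Fintype.card F % 4 = 1) (A : ℤ) (hA : ((Fintype.card F : ℤ) + 1 - A) % 8 = 0)
    (d : F) (hd0 : d ≠ 0) (hd1 : d ≠ 1)
    (htr : -(∑ x : F, quadraticChar F (x * (x - 1) * (x - d))) = -A) :
    ¬ IsSquare d := by
  intro hsq
  obtain ⟨e, he⟩ := hsq
  subst he
  set d := e * e with hd
  have hF2 : ringChar F ≠ 2 := by
    intro h
    have := FiniteField.even_card_iff_char_two.mp h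
    omega
  have h2 : (2 : F) ≠ 0 := Ring.two_ne_zero hF2
  obtain ⟨i, hi⟩ : IsSquare (-1 : F) := (FiniteField.isSquare_neg_one_iff).mpr (by omega)
  have he0 : e ≠ 0 := fun h => hd0 (by rw [hd, h]; ring)
  have he1 : e ≠ 1 := fun h => hd1 (by rw [hd, h]; ring)
  have hi0 : i ≠ 0 := by
    intro h
    rw [h, mul_zero] at hi
    exact one_ne_zero (neg_eq_zero.mp hi)
  have hD : (myW d).Δ ≠ 0 := by
    rw [myW_Δ]
    refine mul_ne_zero (mul_ne_zero ?_ (pow_ne_zero 2 hd0)) (pow_ne_zero 2 (sub_ne_zero.mpr hd1))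
    have h16 : (16 : F) = 2 ^ 4 := by norm_num
    rw [h16]
    exact pow_ne_zero 4 h2
  -- points
  have hT0 : (myW d).Nonsingular 0 0 :=
    (WeierstrassCurve.Affine.equation_iff_nonsingular_of_Δ_ne_zero (W := myW d) hD).mp ((myW_equation_iff d 0 0).mpr (by ring))
  have hT1 : (myW d).Nonsingular 1 0 :=
    (WeierstrassCurve.Affine.equation_iff_nonsingular_of_Δ_ne_zero (W := myW d) hD).mp ((myW_equation_iff d 1 0).mpr (by ring))
  set yQ : F := i * e * (e - 1) with hyQ
  have hQ : (myW d).Nonsingular e yQ :=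
    (WeierstrassCurve.Affine.equation_iff_nonsingular_of_Δ_ne_zero (W := myW d) hD).mp ((myW_equation_iff d e yQ).mpr (by
      rw [hyQ, hd]; linear_combination (-(e ^ 2 * (e - 1) ^ 2)) * hi))
  have hyQ0 : yQ ≠ 0 := mul_ne_zero (mul_ne_zero hi0 he0) (sub_ne_zero.mpr he1)
  have hyne : yQ ≠ (myW d).negY e yQ := by
    rw [myW_negY]
    intro h
    apply hyQ0
    have h2y : 2 * yQ = 0 := by linear_combination h
    exact (mul_eq_zero.mp h2y).resolve_left h2
  have hden : yQ - (myW d).negY e yQ ≠ 0 := sub_ne_zero.mpr hyne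
  have hslope : (myW d).slope e e yQ yQ = i * (e - 1) := by
    rw [WeierstrassCurve.Affine.slope_of_Y_ne rfl hyne, div_eq_iff hden, myW_negY]
    show 3 * e ^ 2 + 2 * -(1 + d) * e + d - 0 * yQ = _
    rw [hd, hyQ]
    linear_combination (2 * e * (e - 1) ^ 2) * hi
  have haddX : (myW d).addX e e ((myW d).slope e e yQ yQ) = 0 := by
    rw [hslope]
    show (i * (e - 1)) ^ 2 + 0 * (i * (e - 1)) - -(1 + d) - e - e = 0
    rw [hd]
    linear_combination (-((e - 1) ^ 2)) * hi
  have haddY : (myW d).addY e e yQ ((myW d).slope e e yQ yQ) = 0 := by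
    rw [WeierstrassCurve.Affine.addY, myW_negY, WeierstrassCurve.Affine.negAddY, haddX, hslope,
      hyQ]
    ring
  -- group facts
  have hQQ : Point.some _ _ hQ + Point.some _ _ hQ = Point.some _ _ hT0 :=
    (WeierstrassCurve.Affine.Point.add_self_of_Y_ne hyne).trans
      (some_eq_some _ _ haddX haddY)
  have hT0T0 : Point.some _ _ hT0 + Point.some _ _ hT0 = (0 : (myW d).Point) :=
    WeierstrassCurve.Affine.Point.add_self_of_Y_eq (by rw [myW_negY]; ring)
  have hT1T1 : Point.some _ _ hT1 + Point.some _ _ hT1 = (0 : (myW d).Point) :=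
    WeierstrassCurve.Affine.Point.add_self_of_Y_eq (by rw [myW_negY]; ring)
  have hQ2 : (2 : ℤ) • Point.some _ _ hQ = Point.some _ _ hT0 := by rw [two_zsmul, hQQ]
  have hQ4 : (4 : ℤ) • Point.some _ _ hQ = 0 := by
    rw [show (4 : ℤ) = 2 * 2 by norm_num, mul_zsmul, hQ2, two_zsmul, hT0T0]
  have hQ3 : (3 : ℤ) • Point.some _ _ hQ = -Point.some _ _ hQ := by
    have h34 : (3 : ℤ) • Point.some _ _ hQ + Point.some _ _ hQ = 0 := by
      rw [← hQ4, show (4 : ℤ) = 3 + 1 by norm_num, add_zsmul, one_zsmul]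
    exact eq_neg_of_add_eq_zero_left h34
  have hT12 : (2 : ℤ) • Point.some _ _ hT1 = (0 : (myW d).Point) := by rw [two_zsmul, hT1T1]
  -- the homomorphism
  set φ : ZMod 4 × ZMod 2 →+ (myW d).Point :=
    (ZMod.lift 4 ⟨zmultiplesHom _ (Point.some _ _ hQ), by simpa using hQ4⟩).coprod
      (ZMod.lift 2 ⟨zmultiplesHom _ (Point.some _ _ hT1), by simpa using hT12⟩) with hphi
  have hval : ∀ (a : ZMod 4) (b : ZMod 2),
      φ (a, b) = (a.val : ℤ) • Point.some _ _ hQ + (b.val : ℤ) • Point.some _ _ hT1 := by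
    intro a b
    have ha : ((a.val : ℤ) : ZMod 4) = a := by
      push_cast
      exact ZMod.natCast_rightInverse a
    have hb : ((b.val : ℤ) : ZMod 2) = b := by
      push_cast
      exact ZMod.natCast_rightInverse b
    calc φ (a, b) = φ (((a.val : ℤ) : ZMod 4), ((b.val : ℤ) : ZMod 2)) := by rw [ha, hb]
      _ = _ := by
        rw [hphi, AddMonoidHom.coprod_apply, ZMod.lift_coe, ZMod.lift_coe,
          zmultiplesHom_apply, zmultiplesHom_apply]
  have hinj : Function.Injective φ := by
    rw [injective_iff_map_eq_zero]
    rintro ⟨a, b⟩ hab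
    rw [hval a b] at hab
    have hc4 : ∀ x : ZMod 4, x = 0 ∨ x = 1 ∨ x = 2 ∨ x = 3 := by decide
    have hc2 : ∀ x : ZMod 2, x = 0 ∨ x = 1 := by decide
    have hv40 : ((0 : ZMod 4).val : ℤ) = 0 := by decide
    have hv41 : ((1 : ZMod 4).val : ℤ) = 1 := by decide
    have hv42 : ((2 : ZMod 4).val : ℤ) = 2 := by decide
    have hv43 : ((3 : ZMod 4).val : ℤ) = 3 := by decide
    have hv20 : ((0 : ZMod 2).val : ℤ) = 0 := by decide
    have hv21 : ((1 : ZMod 2).val : ℤ) = 1 := by decide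
    rcases hc4 a with rfl | rfl | rfl | rfl <;> rcases hc2 b with rfl | rfl <;>
      simp only [hv40, hv41, hv42, hv43, hv20, hv21, zero_zsmul, one_zsmul, zero_add,
        add_zero] at hab ⊢
    · rfl
    · -- (0,1) : T1 = 0
      exact absurd hab (WeierstrassCurve.Affine.Point.some_ne_zero hT1)
    · -- (1,0) : Q = 0
      exact absurd hab (WeierstrassCurve.Affine.Point.some_ne_zero hQ)
    · -- (1,1) : Q + T1 = 0
      have h' : Point.some _ _ hQ = -Point.some _ _ hT1 := eq_neg_of_add_eq_zero_left hab
      rw [WeierstrassCurve.Affine.Point.neg_some] at h'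
      exact absurd h' (some_ne_some _ _ he1)
    · -- (2,0) : T0 = 0
      rw [hQ2] at hab
      exact absurd hab (WeierstrassCurve.Affine.Point.some_ne_zero hT0)
    · -- (2,1) : T0 + T1 = 0
      rw [hQ2] at hab
      have h' : Point.some _ _ hT0 = -Point.some _ _ hT1 := eq_neg_of_add_eq_zero_left hab
      rw [WeierstrassCurve.Affine.Point.neg_some] at h'
      exact absurd h' (some_ne_some _ _ zero_ne_one)
    · -- (3,0) : -Q = 0
      rw [hQ3] at hab
      rw [neg_eq_zero] at hab
      exact absurd hab (WeierstrassCurve.Affine.Point.some_ne_zero hQ)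
    · -- (3,1) : -Q + T1 = 0
      rw [hQ3] at hab
      have h' : Point.some _ _ hT1 = Point.some _ _ hQ := by
        have := eq_neg_of_add_eq_zero_right hab
        rwa [neg_neg] at this
      exact absurd h' (some_ne_some _ _ (Ne.symm he1))
  -- Lagrange
  have h8 : (8 : ℕ) ∣ Nat.card (myW d).Point := by
    have hdvd := AddSubgroup.card_addSubgroup_dvd_card φ.range
    have hc : Nat.card φ.range = 8 := by
      rw [Nat.card_congr (AddMonoidHom.ofInjective hinj).toEquiv.symm]
      simp [Nat.card_eq_fintype_card]
    rwa [hc] at hdvd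
  -- counting
  have hcount := myCard d hD hF2
  have hS : (∑ x : F, (quadraticChar F (x * (x - 1) * (x - d)) : ℤ)) = A := neg_inj.mp htr
  rw [hS] at hcount
  obtain ⟨k, hk⟩ := h8
  rw [hk] at hcount
  push_cast at hcount
  omega
end

section
/- Let q ≡ 1 (mod 4) be an odd prime power and A an integer with q+1−A ≡ 0 (mod 8). Then the number of nonsquare d ∈ F_q \ {0,1} with trace A(d)=A equals the number of nonsquare d ∈ F_q \ {0,1} with A(d)=−A, where A(d) = −∑_{x∈F_q} χ(x(x−1)(x−d)). -/
open scoped Classical in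
lemma Asum_inv (F : Type*) [Field F] [Fintype F] [DecidableEq F]
    {d : F} (hd0 : d ≠ 0) (hdns : ¬ IsSquare d) :
    (∑ x : F, quadraticChar F (x * (x - 1) * (x - d⁻¹)))
      = -∑ x : F, quadraticChar F (x * (x - 1) * (x - d)) := by
  have hcd : quadraticChar F d⁻¹ = -1 :=
    quadraticChar_neg_one_iff_not_isSquare.mpr (by simpa using hdns)
  have hbij : Function.Bijective (fun x : F => d⁻¹ * x) :=
    (Equiv.mulLeft₀ d⁻¹ (inv_ne_zero hd0)).bijective
  rw [← Function.Bijective.sum_comp hbij (fun x => quadraticChar F (x * (x - 1) * (x - d⁻¹))),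
    ← Finset.sum_neg_distrib]
  apply Finset.sum_congr rfl
  intro x _
  have key : (d⁻¹ * x) * ((d⁻¹ * x) - 1) * ((d⁻¹ * x) - d⁻¹)
      = d⁻¹ * d⁻¹ * d⁻¹ * (x * (x - 1) * (x - d)) := by
    field_simp
  rw [key]
  simp only [map_mul, hcd]
  ring

open scoped Classical in
theorem nonsquare_trace_counts_eq (F : Type*) [Field F] [Fintype F] [DecidableEq F]
    (hq : Fintype.card F % 4 = 1) (A : ℤ) (hA : ((Fintype.card F : ℤ) + 1 - A) % 8 = 0) :
    (Finset.univ.filter (fun d : F => d ≠ 0 ∧ d ≠ 1 ∧ ¬ IsSquare d ∧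
        -(∑ x : F, quadraticChar F (x * (x - 1) * (x - d))) = A)).card
      = (Finset.univ.filter (fun d : F => d ≠ 0 ∧ d ≠ 1 ∧ ¬ IsSquare d ∧
          -(∑ x : F, quadraticChar F (x * (x - 1) * (x - d))) = -A)).card := by
  apply Finset.card_nbij (fun d => d⁻¹)
  · intro d hd
    simp only [Finset.mem_coe, Finset.mem_filter, Finset.mem_univ, true_and] at hd ⊢
    obtain ⟨h0, h1, hns, hAd⟩ := hd
    refine ⟨inv_ne_zero h0, fun h => h1 (by simpa using congrArg Inv.inv h),
      by simpa using hns, ?_⟩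
    rw [Asum_inv F h0 hns]
    omega
  · intro d hd e he hde
    simpa using congrArg Inv.inv hde
  · intro d hd
    simp only [Finset.mem_coe, Finset.mem_filter, Finset.mem_univ, true_and, Set.mem_image] at hd ⊢
    obtain ⟨h0, h1, hns, hAd⟩ := hd
    refine ⟨d⁻¹, ⟨inv_ne_zero h0, fun h => h1 (by simpa using congrArg Inv.inv h),
      by simpa using hns, ?_⟩, by simp⟩
    rw [Asum_inv F h0 hns]
    omega
end
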